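/- arXiv:1304.0519 — 3 statements merged into one kernel-verified Lean document; each statement's English description precedes it below -/
import Mathlib

section
/- Let θ be irrational, P ∈ SL(2,ℝ), and A ∈ SL(2,ℝ). Set B = P R_θ P⁻¹ (R_θ rotation by 2πθ). Then there exists k ≥ 1 such that B^k A is elliptic, i.e., |tr(B^k A)| < 2. -/
/-!
Conjugating by `P`, `tr (B ^ k * A) = tr (R_{kθ} * M)` with `M = P⁻¹ A P`. The function
`x ↦ tr (R_x * M)` is continuous and antiperiodic with antiperiod `1/2` (as `R_{x + 1/2} = -R_x`),
so it vanishes somewhere and is smaller than `2` in absolute value on an open set invariant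
under `x ↦ x + 1`. Since `θ` is irrational, the multiples `k θ` with `k ≥ 1` are dense modulo `1`
and enter that set.
-/

open Matrix Real

noncomputable def Rot (θ : ℝ) : Matrix (Fin 2) (Fin 2) ℝ :=
  !![Real.cos (2 * π * θ), -Real.sin (2 * π * θ);
     Real.sin (2 * π * θ),  Real.cos (2 * π * θ)]

open Filter Function

theorem Function.Antiperiodic.exists_eq_zero {f : ℝ → ℝ} {c : ℝ} (hf : Antiperiodic f c)
    (hcont : Continuous f) : ∃ x, f x = 0 := by
  have h0 : (0 : ℝ) ∈ Set.uIcc (f 0) (f c) := by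
    rw [hf.eq]
    rcases le_total 0 (f 0) with h | h
    · exact Set.mem_uIcc.2 (Or.inr ⟨by linarith, h⟩)
    · exact Set.mem_uIcc.2 (Or.inl ⟨h, by linarith⟩)
  obtain ⟨x, -, hx⟩ := intermediate_value_uIcc hcont.continuousOn h0
  exact ⟨x, hx⟩

theorem AddCircle.frequently_atTop_nsmul_mem {p θ : ℝ} [Fact (0 < p)] (hθ : Irrational (θ / p))
    {U : Set (AddCircle p)} (hU : IsOpen U) (hne : U.Nonempty) :
    ∃ᶠ k : ℕ in atTop, k • (θ : AddCircle p) ∈ U := by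
  obtain ⟨x, hx⟩ := hne
  -- By compactness, the closure of the `ℤ`-orbit consists of cluster points of the `ℕ`-orbit.
  have hcl : MapClusterPt x atTop (· • (θ : AddCircle p) : ℕ → AddCircle p) :=
    (mapClusterPt_atTop_nsmul_tfae x _).out 0 3 |>.2 <|
      (AddCircle.denseRange_zsmul_coe_iff.2 hθ) x
  exact mapClusterPt_iff_frequently.1 hcl U (hU.mem_nhds hx)

theorem Function.Periodic.frequently_atTop_apply_nat_mul_mem {α : Type*} [TopologicalSpace α]
    {f : ℝ → α} {p θ : ℝ} (hf : Periodic f p) (hcont : Continuous f) (hp : 0 < p)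
    (hθ : Irrational (θ / p)) {V : Set α} (hV : IsOpen V) {x : ℝ} (hx : f x ∈ V) :
    ∃ᶠ k : ℕ in atTop, f (k * θ) ∈ V := by
  have : Fact (0 < p) := ⟨hp⟩
  have hlift : Continuous (hf.lift : AddCircle p → α) := hcont.quotient_lift _
  refine (AddCircle.frequently_atTop_nsmul_mem hθ (hV.preimage hlift) ⟨x, hx⟩).mono fun k hk => ?_
  rwa [Set.mem_preimage, ← AddCircle.coe_nsmul, nsmul_eq_mul, hf.lift_coe] at hk

theorem trace_conj_pow_mul {n α : Type*} [Fintype n] [DecidableEq n] [CommRing α]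
    {P : Matrix n n α} (hP : IsUnit P.det) (R A : Matrix n n α) (k : ℕ) :
    ((P * R * P⁻¹) ^ k * A).trace = (R ^ k * (P⁻¹ * A * P)).trace := by
  have hconj : SemiconjBy P R (P * R * P⁻¹) := by
    rw [SemiconjBy, Matrix.mul_assoc, Matrix.nonsing_inv_mul P hP, Matrix.mul_one]
  have hpow : (P * R * P⁻¹) ^ k = P * R ^ k * P⁻¹ := by
    rw [(hconj.pow_right k).eq, Matrix.mul_assoc _ P, Matrix.mul_nonsing_inv P hP, Matrix.mul_one]
  rw [hpow, Matrix.mul_assoc P, Matrix.mul_assoc P, trace_mul_comm P]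
  simp only [Matrix.mul_assoc]

theorem Rot_add (a b : ℝ) : Rot (a + b) = Rot a * Rot b := by
  rw [Rot, Rot, Rot, mul_fin_two, mul_add, cos_add, sin_add]
  ext i j
  fin_cases i <;> fin_cases j <;> simp <;> ring

theorem Rot_pow (θ : ℝ) (k : ℕ) : Rot θ ^ k = Rot (k * θ) := by
  induction k with
  | zero => simp [Rot, Matrix.one_fin_two]
  | succ n ih => rw [pow_succ, ih, ← Rot_add, Nat.cast_succ, add_one_mul]

theorem Rot_antiperiodic : Antiperiodic Rot (1 / 2) := by
  intro x
  have h : 2 * π * (x + 1 / 2) = 2 * π * x + π := by ring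
  rw [Rot, Rot, h, cos_add_pi, sin_add_pi]
  ext i j
  fin_cases i <;> fin_cases j <;> simp

@[fun_prop]
theorem continuous_Rot : Continuous Rot := by
  unfold Rot
  fun_prop

theorem stmt_3_general (θ : ℝ) (hθ : Irrational θ)
    (P A : Matrix (Fin 2) (Fin 2) ℝ) (hP : P.det = 1)
    (B : Matrix (Fin 2) (Fin 2) ℝ) (hB : B = P * Rot θ * P⁻¹) :
    ∃ k : ℕ, 1 ≤ k ∧ |(B ^ k * A).trace| < 2 := by
  set f : ℝ → ℝ := fun x => (Rot x * (P⁻¹ * A * P)).trace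
  have hf : Antiperiodic f (1 / 2) := fun x => by
    simp only [f, Rot_antiperiodic x, Matrix.neg_mul, trace_neg]
  have hcont : Continuous f := by fun_prop
  obtain ⟨x, hx⟩ := hf.exists_eq_zero hcont
  have hθ' : Irrational (θ / (2 * (1 / 2))) := by simpa using hθ
  have hfreq := hf.periodic_two_mul.frequently_atTop_apply_nat_mul_mem hcont (by norm_num) hθ'
    isOpen_Ioo (by simp [hx] : f x ∈ Set.Ioo (-2) 2)
  obtain ⟨k, hk, hk1⟩ := (hfreq.and_eventually (eventually_ge_atTop 1)).exists
  refine ⟨k, hk1, abs_lt.2 ?_⟩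
  rwa [hB, trace_conj_pow_mul (hP ▸ isUnit_one), Rot_pow]

theorem stmt_3 (θ : ℝ) (hθ : Irrational θ)
    (P A : Matrix (Fin 2) (Fin 2) ℝ) (hP : P.det = 1) (hA : A.det = 1)
    (B : Matrix (Fin 2) (Fin 2) ℝ) (hB : B = P * Rot θ * P⁻¹) :
    ∃ k : ℕ, 1 ≤ k ∧ |(B ^ k * A).trace| < 2 :=
  stmt_3_general θ hθ P A hP B hB
end

section
/- Let α ∈ ℝᵈ be Diophantine: there are C, τ > 0 with ‖⟨k,α⟩‖_{ℝ/ℤ} ≥ C‖k‖^{-τ} for all nonzero k ∈ ℤᵈ. Then for the translation S_α on 𝕋ᵈ there exist constants C', N₀ such that for every γ ∈ (0,1), every x ∈ 𝕋ᵈ, and every ball B ⊂ 𝕋ᵈ of radius γ, there exists k with 0 ≤ k ≤ C' γ^{-C'} such that S_α^k(x) ∈ B. That is, Diophantine translation orbits become γ-dense in time polynomial in γ⁻¹. -/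
/-!
Let `q` be the indicator of the arc `[-γ/2, γ/2]` smoothed by the Fejér kernel of degree `K`:
a nonnegative trigonometric polynomial of degree `< K` with mean `γ`, bounded by `1`, and
bounded by `1/(Kγ)` at circle distance `≥ γ` from `0`. With `Φ(x) = ∏ᵢ q(xᵢ)` and
`K ≈ 4γ^{-(d+1)}`, every term of `∑_{k<N} Φ(kα + c)` whose point misses the `γ`-box is at most
`γ^d/4`. On the other hand, expanding `Φ` in Fourier modes, the zero mode contributes exactly
`Nγ^d`, and each of the at most `K^{2d}` nonzero modes `m` has coefficient of size `≤ (γ/K)^d`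
and contributes a geometric sum bounded by `1/(2‖⟨m,α⟩‖) ≤ K^τ/(2C)`. Once
`N ≥ 2K^{d+τ}/C`, the total error is `≤ Nγ^d/4`, so some `k < N` must hit the box.
-/

open Real Finset
open scoped FourierTransform

theorem fourierChar_add_intCast (t : ℝ) (n : ℤ) : 𝐞 (t + n) = 𝐞 t := by
  rw [AddChar.map_add_eq_mul, fourierChar_apply' (n : ℝ), Circle.exp_two_pi_mul_int, mul_one]

theorem coe_fourierChar_sum {ι : Type*} (s : Finset ι) (x : ι → ℝ) :
    (𝐞 (∑ i ∈ s, x i) : ℂ) = ∏ i ∈ s, (𝐞 (x i) : ℂ) := by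
  simp only [fourierChar_apply, ← Complex.exp_sum, mul_sum, Complex.ofReal_sum, sum_mul]

theorem norm_fourierChar_sub_one (t : ℝ) : ‖(𝐞 t : ℂ) - 1‖ = 2 * |sin (π * t)| := by
  rw [fourierChar_apply, mul_comm, Complex.norm_exp_I_mul_ofReal_sub_one, norm_mul,
    Real.norm_eq_abs, Real.norm_eq_abs, abs_two]
  ring_nf

theorem four_mul_norm_le_norm_fourierChar_sub_one (t : ℝ) :
    4 * ‖(t : UnitAddCircle)‖ ≤ ‖(𝐞 t : ℂ) - 1‖ := by
  set r := t - round t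
  have hπr : |π * r| ≤ π / 2 := by
    rw [abs_mul, abs_of_pos pi_pos]
    nlinarith [abs_sub_round t, pi_pos]
  have hsin := mul_abs_le_abs_sin hπr
  rw [abs_mul, abs_of_pos pi_pos, ← mul_assoc, div_mul_cancel₀ _ pi_ne_zero] at hsin
  have hshift : 𝐞 t = 𝐞 r := by rw [← fourierChar_add_intCast r (round t), sub_add_cancel]
  rw [UnitAddCircle.norm_eq, hshift, norm_fourierChar_sub_one]
  linarith

theorem norm_sum_range_fourierChar_mul_le {t : ℝ} (ht : 0 < ‖(t : UnitAddCircle)‖) (N : ℕ) :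
    ‖∑ k ∈ range N, (𝐞 (k * t) : ℂ)‖ ≤ (2 * ‖(t : UnitAddCircle)‖)⁻¹ := by
  have hsub := four_mul_norm_le_norm_fourierChar_sub_one t
  have hne : (𝐞 t : ℂ) ≠ 1 := by
    intro h; rw [h, sub_self, norm_zero] at hsub; linarith
  have hpow (k : ℕ) : (𝐞 (k * t) : ℂ) = (𝐞 t : ℂ) ^ k := by
    rw [← nsmul_eq_mul, AddChar.map_nsmul_eq_pow, Circle.coe_pow]
  have hnum : ‖(𝐞 t : ℂ) ^ N - 1‖ ≤ 2 :=
    (norm_sub_le _ _).trans (by rw [norm_pow, Circle.norm_coe]; norm_num)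
  simp_rw [hpow]
  rw [geom_sum_eq hne, norm_div, div_le_iff₀ (by linarith), inv_mul_eq_div,
    le_div_iff₀ (by linarith)]
  nlinarith

def pairDiff (p : ℕ × ℕ) : ℤ := p.1 - p.2

theorem card_filter_pairDiff_eq_zero (K : ℕ) :
    #{p ∈ range K ×ˢ range K | pairDiff p = 0} = K := by
  have : {p ∈ range K ×ˢ range K | pairDiff p = 0} = (range K).diag := by
    rw [diag_eq_filter]
    refine filter_congr fun p _ => ?_
    rw [pairDiff, sub_eq_zero, Nat.cast_inj]
  rw [this, diag_card, card_range]

noncomputable def fejerKernel (K : ℕ) (t : ℝ) : ℝ := ‖∑ j ∈ range K, (𝐞 (j * t) : ℂ)‖ ^ 2 / K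

theorem fejerKernel_nonneg (K : ℕ) (t : ℝ) : 0 ≤ fejerKernel K t := by
  unfold fejerKernel; positivity

theorem continuous_fejerKernel (K : ℕ) : Continuous (fejerKernel K) := by
  unfold fejerKernel; fun_prop

theorem ofReal_fejerKernel (K : ℕ) (t : ℝ) :
    (fejerKernel K t : ℂ) = (K : ℂ)⁻¹ * ∑ p ∈ range K ×ˢ range K, (𝐞 (pairDiff p * t) : ℂ) := by
  have hconj : (starRingEnd ℂ) (∑ j ∈ range K, (𝐞 (j * t) : ℂ)) =
      ∑ l ∈ range K, (𝐞 (-(l * t)) : ℂ) := by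
    simp_rw [map_sum, AddChar.map_neg_eq_inv, Circle.coe_inv_eq_conj]
  rw [fejerKernel, Complex.ofReal_div, Complex.ofReal_pow, ← Complex.mul_conj', hconj,
    sum_mul_sum, ← sum_product', Complex.ofReal_natCast, div_eq_inv_mul]
  congr 1
  refine sum_congr rfl fun p _ => ?_
  rw [← Circle.coe_mul, ← AddChar.map_add_eq_mul, pairDiff]
  push_cast
  ring_nf

theorem fejerKernel_le {K : ℕ} (hK : 0 < K) {t : ℝ} (ht : 0 < ‖(t : UnitAddCircle)‖) :
    fejerKernel K t ≤ (4 * K * ‖(t : UnitAddCircle)‖ ^ 2)⁻¹ := by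
  have hK' : (0 : ℝ) < K := by exact_mod_cast hK
  have hsq := pow_le_pow_left₀ (norm_nonneg _) (norm_sum_range_fourierChar_mul_le ht K) 2
  rw [fejerKernel, div_le_iff₀ hK']
  calc _ ≤ ((2 * ‖(t : UnitAddCircle)‖)⁻¹) ^ 2 := hsq
    _ = _ := by field_simp; ring

noncomputable def arcCoeff (γ : ℝ) (m : ℤ) : ℂ := ∫ u in -(γ / 2)..γ / 2, (𝐞 (m * u) : ℂ)

theorem arcCoeff_zero (γ : ℝ) : arcCoeff γ 0 = γ := by
  simp [arcCoeff]

theorem norm_arcCoeff_le {γ : ℝ} (hγ : 0 ≤ γ) (m : ℤ) : ‖arcCoeff γ m‖ ≤ γ := by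
  have h := intervalIntegral.norm_integral_le_of_norm_le_const (a := -(γ / 2)) (b := γ / 2)
    (C := 1) (f := fun u => (𝐞 (m * u) : ℂ)) fun u _ => (Circle.norm_coe _).le
  rwa [one_mul, show γ / 2 - -(γ / 2) = γ by ring, abs_of_nonneg hγ] at h

theorem arcCoeff_one (m : ℤ) : arcCoeff 1 m = if m = 0 then 1 else 0 := by
  split_ifs with hm
  · rw [hm, arcCoeff_zero, Complex.ofReal_one]
  set c : ℂ := 2 * π * m * Complex.I with hc_def
  have hc : c ≠ 0 := by simp [c, hm, pi_ne_zero]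
  have hexp (u : ℝ) : (𝐞 (m * u) : ℂ) = Complex.exp (c * u) := by
    rw [fourierChar_apply, hc_def]; push_cast; ring_nf
  have hperiod : (𝐞 (m * (1 / 2)) : ℂ) = 𝐞 (m * -(1 / 2)) := by
    rw [← fourierChar_add_intCast (m * -(1 / 2)) m]; ring_nf
  rw [arcCoeff]
  simp_rw [hexp]
  rw [integral_exp_mul_complex hc, ← hexp, ← hexp, hperiod, sub_self, zero_div]

theorem integral_fourierChar_window (m : ℤ) (γ t : ℝ) :
    ∫ s in t - γ / 2..t + γ / 2, (𝐞 (m * s) : ℂ) = 𝐞 (m * t) * arcCoeff γ m := by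
  have hshift (u : ℝ) : (𝐞 (m * (u + t)) : ℂ) = 𝐞 (m * t) * 𝐞 (m * u) := by
    rw [← Circle.coe_mul, ← AddChar.map_add_eq_mul]; ring_nf
  rw [arcCoeff, ← intervalIntegral.integral_const_mul, sub_eq_neg_add, add_comm t,
    ← intervalIntegral.integral_comp_add_right]
  simp_rw [hshift]

noncomputable def fejerCoeff (K : ℕ) (γ : ℝ) (p : ℕ × ℕ) : ℂ := (K : ℂ)⁻¹ * arcCoeff γ (pairDiff p)

theorem norm_fejerCoeff_le (K : ℕ) {γ : ℝ} (hγ : 0 ≤ γ) (p : ℕ × ℕ) :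
    ‖fejerCoeff K γ p‖ ≤ γ / K := by
  rw [fejerCoeff, norm_mul, norm_inv, Complex.norm_natCast, inv_mul_eq_div]
  exact div_le_div_of_nonneg_right (norm_arcCoeff_le hγ _) (Nat.cast_nonneg K)

theorem sum_filter_fejerCoeff {K : ℕ} (hK : 0 < K) (γ : ℝ) :
    ∑ p ∈ range K ×ˢ range K with pairDiff p = 0, fejerCoeff K γ p = γ := by
  rw [sum_congr rfl fun p hp => by rw [fejerCoeff, (mem_filter.mp hp).2, arcCoeff_zero],
    sum_const, card_filter_pairDiff_eq_zero, nsmul_eq_mul, ← mul_assoc,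
    mul_inv_cancel₀ (by exact_mod_cast hK.ne'), one_mul]

noncomputable def fejerMean (K : ℕ) (γ t : ℝ) : ℝ :=
  ∫ s in t - γ / 2..t + γ / 2, fejerKernel K s

theorem fejerMean_nonneg (K : ℕ) {γ : ℝ} (hγ : 0 ≤ γ) (t : ℝ) : 0 ≤ fejerMean K γ t :=
  intervalIntegral.integral_nonneg (by linarith) fun s _ => fejerKernel_nonneg K s

theorem ofReal_fejerMean (K : ℕ) (γ t : ℝ) :
    (fejerMean K γ t : ℂ) =
      ∑ p ∈ range K ×ˢ range K, fejerCoeff K γ p * 𝐞 (pairDiff p * t) := by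
  have hint (p : ℕ × ℕ) : IntervalIntegrable (fun s : ℝ => (𝐞 (pairDiff p * s) : ℂ))
      MeasureTheory.volume (t - γ / 2) (t + γ / 2) :=
    (by fun_prop : Continuous fun s : ℝ => (𝐞 (pairDiff p * s) : ℂ)).intervalIntegrable _ _
  rw [fejerMean, ← intervalIntegral.integral_ofReal]
  simp_rw [ofReal_fejerKernel]
  rw [intervalIntegral.integral_const_mul, intervalIntegral.integral_finsetSum fun p _ => hint p,
    mul_sum]
  refine sum_congr rfl fun p _ => ?_
  rw [integral_fourierChar_window, fejerCoeff]
  ring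

theorem fejerMean_one {K : ℕ} (hK : 0 < K) (t : ℝ) : fejerMean K 1 t = 1 := by
  have h := ofReal_fejerMean K 1 t
  simp_rw [fejerCoeff, arcCoeff_one] at h
  rw [← Complex.ofReal_inj, h, ← sum_filter_fejerCoeff hK 1, sum_filter]
  refine sum_congr rfl fun p _ => ?_
  split_ifs with hp <;> simp [hp, fejerCoeff, arcCoeff_zero]

theorem fejerMean_le_one {K : ℕ} (hK : 0 < K) {γ : ℝ} (hγ : 0 ≤ γ) (hγ1 : γ ≤ 1) (t : ℝ) :
    fejerMean K γ t ≤ 1 := by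
  rw [← fejerMean_one hK t]
  exact intervalIntegral.integral_mono_interval (by linarith) (by linarith) (by linarith)
    (MeasureTheory.ae_of_all _ (fejerKernel_nonneg K))
    ((continuous_fejerKernel K).intervalIntegrable _ _)

theorem fejerMean_le_of_le_norm {K : ℕ} (hK : 0 < K) {γ t : ℝ} (hγ : 0 < γ)
    (ht : γ ≤ ‖(t : UnitAddCircle)‖) : fejerMean K γ t ≤ (K * γ)⁻¹ := by
  have hbound : ∀ s ∈ Set.uIoc (t - γ / 2) (t + γ / 2), ‖fejerKernel K s‖ ≤ (K * γ ^ 2)⁻¹ := by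
    intro s hs
    rw [Set.uIoc_of_le (by linarith)] at hs
    have hts : ‖((t - s : ℝ) : UnitAddCircle)‖ ≤ γ / 2 :=
      QuotientAddGroup.norm_mk_le_norm.trans <| by
        rw [Real.norm_eq_abs, abs_le]; constructor <;> linarith [hs.1, hs.2]
    have hs' : γ / 2 ≤ ‖(s : UnitAddCircle)‖ := by
      have := norm_add_le ((t - s : ℝ) : UnitAddCircle) (s : UnitAddCircle)
      rw [← AddCircle.coe_add, sub_add_cancel] at this
      linarith
    rw [Real.norm_eq_abs, abs_of_nonneg (fejerKernel_nonneg K s)]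
    calc fejerKernel K s ≤ (4 * K * ‖(s : UnitAddCircle)‖ ^ 2)⁻¹ :=
          fejerKernel_le hK (by linarith)
      _ ≤ (4 * K * (γ / 2) ^ 2)⁻¹ := by gcongr
      _ = (K * γ ^ 2)⁻¹ := by ring
  have h := intervalIntegral.norm_integral_le_of_norm_le_const hbound
  rw [Real.norm_eq_abs, show t + γ / 2 - (t - γ / 2) = γ by ring, abs_of_pos hγ] at h
  calc fejerMean K γ t ≤ (K * γ ^ 2)⁻¹ * γ := (le_abs_self _).trans h
    _ = (K * γ)⁻¹ := by field_simp

section TrigonometricSums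

variable {σ ι : Type*} [Fintype σ]

theorem prod_sum_mul_fourierChar [DecidableEq σ] (P : Finset ι) (a : ι → ℂ) (n : ι → ℤ)
    (x : σ → ℝ) :
    ∏ i, ∑ p ∈ P, a p * 𝐞 (n p * x i) =
      ∑ f ∈ Fintype.piFinset fun _ : σ => P, (∏ i, a (f i)) * 𝐞 (∑ i, n (f i) * x i) := by
  rw [prod_univ_sum]
  refine sum_congr rfl fun f _ => ?_
  rw [prod_mul_distrib, coe_fourierChar_sum]

theorem sum_filter_prod_eq_pow [DecidableEq σ] (P : Finset ι) (a : ι → ℂ) (n : ι → ℤ) :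
    ∑ f ∈ Fintype.piFinset (fun _ : σ => P) with (fun i => n (f i)) = 0, ∏ i, a (f i) =
      (∑ p ∈ P with n p = 0, a p) ^ Fintype.card σ := by
  rw [sum_filter, sum_filter, ← card_univ, ← prod_const, ← sum_prod_piFinset]
  refine sum_congr rfl fun f _ => ?_
  simp only [prod_ite_zero, funext_iff, Pi.zero_apply, mem_univ, true_imp_iff]

theorem norm_sum_range_sum_sub_le (F : Finset ι) (b : ι → ℂ) (m : ι → σ → ℤ) (α c : σ → ℝ)
    (N : ℕ) {δ : ℝ} (hδ : 0 < δ)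
    (hm : ∀ f ∈ F, m f ≠ 0 → δ ≤ ‖((∑ i, m f i * α i : ℝ) : UnitAddCircle)‖) :
    ‖∑ k ∈ range N, ∑ f ∈ F, b f * 𝐞 (∑ i, m f i * (k * α i + c i)) -
        N * ∑ f ∈ F with m f = 0, b f‖ ≤
      (∑ f ∈ F with m f ≠ 0, ‖b f‖) / (2 * δ) := by
  have horbit (f : ι) (k : ℕ) : (𝐞 (∑ i, m f i * (k * α i + c i)) : ℂ) =
      𝐞 (∑ i, m f i * c i) * 𝐞 (k * ∑ i, m f i * α i) := by
    rw [← Circle.coe_mul, ← AddChar.map_add_eq_mul, mul_sum, ← sum_add_distrib]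
    congr 2
    exact sum_congr rfl fun i _ => by ring
  have hsplit : ∑ k ∈ range N, ∑ f ∈ F, b f * 𝐞 (∑ i, m f i * (k * α i + c i)) -
      N * ∑ f ∈ F with m f = 0, b f = ∑ f ∈ F with m f ≠ 0,
        b f * 𝐞 (∑ i, m f i * c i) * ∑ k ∈ range N, (𝐞 (k * ∑ i, m f i * α i) : ℂ) := by
    rw [sum_comm, ← sum_filter_add_sum_filter_not F (fun f => m f = 0), mul_sum,
      add_sub_right_comm, ← sum_sub_distrib, sum_eq_zero, zero_add]
    · refine sum_congr rfl fun f _ => ?_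
      simp_rw [horbit, mul_sum, mul_assoc]
    · intro f hf
      simp [(mem_filter.mp hf).2]
  rw [hsplit, sum_div]
  refine (norm_sum_le _ _).trans (sum_le_sum fun f hf => ?_)
  obtain ⟨hfF, hf0⟩ := mem_filter.mp hf
  have hθ := hm f hfF hf0
  rw [norm_mul, norm_mul, Circle.norm_coe, mul_one, div_eq_mul_inv]
  gcongr
  exact (norm_sum_range_fourierChar_mul_le (by linarith) N).trans (by gcongr)

end TrigonometricSums

def IsDiophantineWith {σ : Type*} [Fintype σ] (C τ : ℝ) (α : σ → ℝ) : Prop :=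
  ∀ k : σ → ℤ, k ≠ 0 →
    C * ‖fun i => (k i : ℝ)‖ ^ (-τ) ≤ ‖((∑ i, k i * α i : ℝ) : UnitAddCircle)‖

theorem IsDiophantineWith.le_norm {σ : Type*} [Fintype σ] {C τ : ℝ} {α : σ → ℝ}
    (hα : IsDiophantineWith C τ α) (hC : 0 ≤ C) (hτ : 0 ≤ τ) {K : ℝ} {m : σ → ℤ} (hm : m ≠ 0)
    (hmK : ‖fun i => (m i : ℝ)‖ ≤ K) :
    C * K ^ (-τ) ≤ ‖((∑ i, m i * α i : ℝ) : UnitAddCircle)‖ := by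
  have hpos : 0 < ‖fun i => (m i : ℝ)‖ := by
    refine norm_pos_iff.mpr fun h => hm (funext fun i => ?_)
    simpa using congrFun h i
  exact (mul_le_mul_of_nonneg_left (rpow_le_rpow_of_nonpos hpos hmK (by linarith)) hC).trans
    (hα m hm)

section Diophantine

variable {σ : Type*} [Fintype σ] [DecidableEq σ]

theorem norm_pairDiff_le {K : ℕ} {f : σ → ℕ × ℕ}
    (hf : f ∈ Fintype.piFinset fun _ => range K ×ˢ range K) :
    ‖fun i => (pairDiff (f i) : ℝ)‖ ≤ K := by
  refine (pi_norm_le_iff_of_nonneg (Nat.cast_nonneg K)).mpr fun i => ?_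
  have hi := mem_product.mp (Fintype.mem_piFinset.mp hf i)
  have h1 := mem_range.mp hi.1
  have h2 := mem_range.mp hi.2
  have : |pairDiff (f i)| ≤ K := by rw [pairDiff, abs_le]; omega
  rw [Real.norm_eq_abs, ← Int.cast_abs]
  exact_mod_cast this

theorem sum_norm_prod_fejerCoeff_le {K : ℕ} (hK : 0 < K) {γ : ℝ} (hγ : 0 ≤ γ) :
    ∑ f ∈ Fintype.piFinset (fun _ : σ => range K ×ˢ range K), ‖∏ i, fejerCoeff K γ (f i)‖ ≤
      (K : ℝ) ^ Fintype.card σ * γ ^ Fintype.card σ := by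
  have hnorm (f : σ → ℕ × ℕ) : ‖∏ i, fejerCoeff K γ (f i)‖ ≤ (γ / K) ^ Fintype.card σ := by
    rw [norm_prod, ← card_univ, ← prod_const]
    exact prod_le_prod (fun _ _ => norm_nonneg _) fun i _ => norm_fejerCoeff_le K hγ _
  refine (sum_le_sum fun f _ => hnorm f).trans_eq ?_
  rw [sum_const, Fintype.card_piFinset, prod_const, card_univ, card_product, card_range,
    nsmul_eq_mul, Nat.cast_pow, Nat.cast_mul, ← mul_pow, ← mul_pow]
  congr 1
  field_simp [(Nat.cast_pos.mpr hK).ne']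

theorem ofReal_sum_range_prod_fejerMean (K N : ℕ) (γ : ℝ) (α c : σ → ℝ) :
    ((∑ k ∈ range N, ∏ i, fejerMean K γ (k * α i + c i) : ℝ) : ℂ) =
      ∑ k ∈ range N, ∑ f ∈ Fintype.piFinset (fun _ : σ => range K ×ˢ range K),
        (∏ i, fejerCoeff K γ (f i)) * 𝐞 (∑ i, pairDiff (f i) * (k * α i + c i)) := by
  push_cast
  simp_rw [ofReal_fejerMean, prod_sum_mul_fourierChar]

theorem abs_sum_range_prod_fejerMean_sub_le {α : σ → ℝ} {C τ : ℝ}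
    (hα : IsDiophantineWith C τ α) (hC : 0 < C) (hτ : 0 ≤ τ) {K N : ℕ} (hK : 0 < K)
    (hN : 2 * (K : ℝ) ^ (Fintype.card σ + τ) ≤ C * N) {γ : ℝ} (hγ : 0 ≤ γ) (c : σ → ℝ) :
    |∑ k ∈ range N, ∏ i, fejerMean K γ (k * α i + c i) - γ ^ Fintype.card σ * N| ≤
      γ ^ Fintype.card σ * N / 4 := by
  set d := Fintype.card σ
  set F := Fintype.piFinset fun _ : σ => range K ×ˢ range K
  set S := ∑ k ∈ range N, ∏ i, fejerMean K γ (k * α i + c i)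
  set δ := C * (K : ℝ) ^ (-τ)
  have hK' : (0 : ℝ) < K := by exact_mod_cast hK
  have hδ : 0 < δ := by positivity
  have hzero : ∑ f ∈ F with (fun i => pairDiff (f i)) = 0, ∏ i, fejerCoeff K γ (f i) =
      (γ : ℂ) ^ d := by
    rw [sum_filter_prod_eq_pow, sum_filter_fejerCoeff hK]
  have hcoeff : ∑ f ∈ F with (fun i => pairDiff (f i)) ≠ 0, ‖∏ i, fejerCoeff K γ (f i)‖ ≤
      (K : ℝ) ^ d * γ ^ d :=
    (sum_le_sum_of_subset_of_nonneg (filter_subset _ _) fun _ _ _ => norm_nonneg _).trans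
      (sum_norm_prod_fejerCoeff_le hK hγ)
  have hweyl := norm_sum_range_sum_sub_le F (fun f => ∏ i, fejerCoeff K γ (f i))
    (fun f i => pairDiff (f i)) α c N hδ fun f hf hf0 =>
      hα.le_norm hC.le hτ hf0 (norm_pairDiff_le hf)
  rw [← ofReal_sum_range_prod_fejerMean, hzero] at hweyl
  have herr : (K : ℝ) ^ d * γ ^ d / (2 * δ) ≤ γ ^ d * N / 4 := by
    rw [div_le_div_iff₀ (by positivity) (by norm_num)]
    have : (K : ℝ) ^ d * (K : ℝ) ^ τ ≤ C * N / 2 := by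
      rw [← rpow_natCast, ← rpow_add hK']; linarith
    calc (K : ℝ) ^ d * γ ^ d * 4
        = 4 * γ ^ d * ((K : ℝ) ^ d * (K : ℝ) ^ τ) * (K : ℝ) ^ (-τ) := by
          rw [rpow_neg hK'.le]; field_simp
      _ ≤ 4 * γ ^ d * (C * N / 2) * (K : ℝ) ^ (-τ) := by gcongr
      _ = γ ^ d * N * (2 * δ) := by ring
  have hcast : ((S - γ ^ d * N : ℝ) : ℂ) = (S : ℂ) - N * (γ : ℂ) ^ d := by push_cast; ring
  rw [← Real.norm_eq_abs, ← Complex.norm_real, hcast]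
  linarith [div_le_div_of_nonneg_right hcoeff (by positivity : 0 ≤ 2 * δ)]

theorem prod_fejerMean_le {K : ℕ} (hK : 0 < K) {γ : ℝ} (hγ : 0 < γ) (hγ1 : γ ≤ 1)
    {x : σ → ℝ} (hx : ∃ i, γ ≤ ‖(x i : UnitAddCircle)‖) :
    ∏ i, fejerMean K γ (x i) ≤ (K * γ)⁻¹ := by
  obtain ⟨i, hi⟩ := hx
  rw [← mul_prod_erase univ _ (mem_univ i), ← mul_one (K * γ : ℝ)⁻¹]
  exact mul_le_mul (fejerMean_le_of_le_norm hK hγ hi)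
    (prod_le_one (fun j _ => fejerMean_nonneg K hγ.le _) fun j _ =>
      fejerMean_le_one hK hγ.le hγ1 _)
    (prod_nonneg fun j _ => fejerMean_nonneg K hγ.le _) (by positivity)

theorem IsDiophantineWith.exists_lt_forall_norm_lt {α : σ → ℝ} {C τ : ℝ}
    (hα : IsDiophantineWith C τ α) (hC : 0 < C) (hτ : 0 ≤ τ) {γ : ℝ} (hγ : 0 < γ)
    (hγ1 : γ ≤ 1) {K N : ℕ} (hK : 4 ≤ K * γ ^ (Fintype.card σ + 1))
    (hN : 2 * (K : ℝ) ^ (Fintype.card σ + τ) ≤ C * N) (c : σ → ℝ) :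
    ∃ k < N, ∀ i, ‖((k * α i + c i : ℝ) : UnitAddCircle)‖ < γ := by
  set d := Fintype.card σ
  have hK0 : 0 < K := Nat.pos_of_ne_zero fun h => by norm_num [h] at hK
  have hN0 : (0 : ℝ) < N := by
    have : 0 < 2 * (K : ℝ) ^ ((d : ℝ) + τ) := by positivity
    nlinarith
  by_contra! hfar
  have hterm (k : ℕ) (hk : k ∈ range N) :
      ∏ i, fejerMean K γ (k * α i + c i) ≤ γ ^ d / 4 := by
    refine (prod_fejerMean_le hK0 hγ hγ1 (hfar k (mem_range.mp hk))).trans ?_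
    rw [inv_le_iff_one_le_mul₀ (by positivity)]
    calc (1 : ℝ) = 4 / 4 := by norm_num
      _ ≤ K * γ ^ (d + 1) / 4 := by gcongr
      _ = γ ^ d / 4 * (K * γ) := by ring
  have hupper := sum_le_sum hterm
  rw [sum_const, card_range, nsmul_eq_mul] at hupper
  have hclose := abs_sum_range_prod_fejerMean_sub_le hα hC hτ hK0 hN hγ.le c
  have : 0 < γ ^ d * N := by positivity
  linarith [(abs_le.mp hclose).1]

end Diophantine

theorem natCeil_rpow_le {γ : ℝ} (hγ : 0 < γ) (hγ1 : γ ≤ 1) (e : ℕ) {B : ℝ} (hB : 0 ≤ B) :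
    (⌈4 / γ ^ e⌉₊ : ℝ) ^ B ≤ 5 ^ B * γ ^ (-(e * B)) := by
  have hγe : 0 < γ ^ e := by positivity
  have hK : (⌈4 / γ ^ e⌉₊ : ℝ) ≤ 5 / γ ^ e := by
    have h1 : 1 ≤ 1 / γ ^ e := by
      rw [le_div_iff₀ hγe, one_mul]; exact pow_le_one₀ hγ.le hγ1
    have h2 := Nat.ceil_lt_add_one (by positivity : 0 ≤ 4 / γ ^ e)
    linarith [show 5 / γ ^ e = 4 / γ ^ e + 1 / γ ^ e by ring]
  calc (⌈4 / γ ^ e⌉₊ : ℝ) ^ B ≤ (5 / γ ^ e) ^ B := by gcongr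
    _ = 5 ^ B * γ ^ (-(e * B)) := by
      rw [div_rpow (by norm_num) hγe.le, ← rpow_natCast, ← rpow_mul hγ.le, rpow_neg hγ.le,
        div_eq_mul_inv]

theorem le_mul_rpow_neg_of_lt_natCeil {γ : ℝ} (hγ : 0 < γ) (hγ1 : γ ≤ 1) {C B : ℝ}
    (hC : 0 < C) (hB : 0 ≤ B) (e : ℕ) {k : ℕ} (hk : k < ⌈2 * (⌈4 / γ ^ e⌉₊ : ℝ) ^ B / C⌉₊) :
    (k : ℝ) ≤ (2 * 5 ^ B / C + e * B) * γ ^ (-(2 * 5 ^ B / C + e * B)) := by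
  have hA : 0 ≤ 2 * 5 ^ B / C := by positivity
  calc (k : ℝ) ≤ 2 * (⌈4 / γ ^ e⌉₊ : ℝ) ^ B / C := (Nat.lt_ceil.mp hk).le
    _ ≤ 2 * (5 ^ B * γ ^ (-(e * B))) / C := by gcongr; exact natCeil_rpow_le hγ hγ1 e hB
    _ = 2 * 5 ^ B / C * γ ^ (-(e * B)) := by ring
    _ ≤ (2 * 5 ^ B / C + e * B) * γ ^ (-(2 * 5 ^ B / C + e * B)) :=
      mul_le_mul (by nlinarith) (rpow_le_rpow_of_exponent_ge hγ hγ1 (by linarith))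
        (by positivity) (by positivity)

theorem stmt_13_general {d : ℕ} (α : Fin d → ℝ)
    (hdio : ∃ C > (0 : ℝ), ∃ τ > (0 : ℝ), ∀ k : Fin d → ℤ, k ≠ 0 →
      C * ‖(fun i => (k i : ℝ))‖ ^ (-τ) ≤
        ‖((∑ i, (k i : ℝ) * α i : ℝ) : AddCircle (1 : ℝ))‖) :
    ∃ C' > (0 : ℝ), ∀ γ : ℝ, 0 < γ → γ < 1 →
      ∀ x y : Fin d → AddCircle (1 : ℝ),
        ∃ k : ℕ, (k : ℝ) ≤ C' * γ ^ (-C') ∧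
          dist (x + k • fun i => ((α i : ℝ) : AddCircle (1 : ℝ))) y < γ := by
  obtain ⟨C, hC, τ, hτ, hα⟩ := hdio
  set B : ℝ := d + τ
  refine ⟨2 * 5 ^ B / C + (d + 1 : ℕ) * B, by positivity, fun γ hγ hγ1 x y => ?_⟩
  set K := ⌈4 / γ ^ (d + 1)⌉₊
  have hK : 4 ≤ K * γ ^ (d + 1) := (div_le_iff₀ (by positivity)).mp (Nat.le_ceil _)
  have hN : 2 * (K : ℝ) ^ B ≤ C * ⌈2 * (K : ℝ) ^ B / C⌉₊ := (div_le_iff₀' hC).mp (Nat.le_ceil _)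
  choose c hc using fun i => QuotientAddGroup.mk_surjective ((x - y) i)
  obtain ⟨k, hkN, hkc⟩ := IsDiophantineWith.exists_lt_forall_norm_lt (σ := Fin d) hα hC hτ.le
    hγ hγ1.le (by simpa using hK) (by simpa using hN) c
  refine ⟨k, le_mul_rpow_neg_of_lt_natCeil hγ hγ1.le hC (by positivity) (d + 1) hkN, ?_⟩
  rw [dist_eq_norm, pi_norm_lt_iff hγ]
  intro i
  have hcoord : (x + k • (fun i => ((α i : ℝ) : AddCircle (1 : ℝ))) - y) i =
      ((k * α i + c i : ℝ) : UnitAddCircle) := by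
    rw [AddCircle.coe_add, hc i, ← nsmul_eq_mul, AddCircle.coe_nsmul, Pi.sub_apply,
      Pi.sub_apply, Pi.add_apply, Pi.smul_apply]
    abel
  rw [hcoord]
  exact hkc i

theorem stmt_13 {d : ℕ} (hd : 0 < d) (α : Fin d → ℝ)
    (hdio : ∃ C > (0 : ℝ), ∃ τ > (0 : ℝ), ∀ k : Fin d → ℤ, k ≠ 0 →
      C * ‖(fun i => (k i : ℝ))‖ ^ (-τ) ≤
        ‖((∑ i, (k i : ℝ) * α i : ℝ) : AddCircle (1 : ℝ))‖) :
    ∃ C' > (0 : ℝ), ∀ γ : ℝ, 0 < γ → γ < 1 →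
      ∀ x y : Fin d → AddCircle (1 : ℝ),
        ∃ k : ℕ, (k : ℝ) ≤ C' * γ ^ (-C') ∧
          dist (x + k • fun i => ((α i : ℝ) : AddCircle (1 : ℝ))) y < γ :=
  stmt_13_general α hdio
end

section
/- Let T be an interval exchange transformation on I = [0,1) exchanging r intervals with irreducible permutation, satisfying the infinite distinct orbit condition, and let the natural coding assign a distinct symbol to each of the r intervals. Then the complexity function of the resulting subshift satisfies p(n) = (r-1)n + 1 for all n ≥ 1. -/
/-
For `x ≤ y` in `I`, the words of length `n` read along the forward orbits of `x` and `y` agree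
iff no point of `D_n = {T⁻ᵏ(l_j) : 0 ≤ k < n, j ≠ 0}` lies in `(x, y]`: as long as the two codings
agree, `Tᵏ` moves `[x, y]` by a single translation, and they first differ when the translated
interval contains a left endpoint `l_j`. So the word is a step function of `x` jumping exactly
at the points of `D_n`. By IDOC these are `(r - 1) n` distinct points, none of them `0`, since
`T⁻¹(0)` is the endpoint `l_{π⁻¹(0)}`, which is not `0` by irreducibility. Hence there are
`(r - 1) n + 1` words.
-/

open Finset

theorem ncard_range_eq_card_add_one {α β : Type*} [LinearOrder α] {f : α → β} {D : Finset α}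
    {x₀ : α} (hx₀ : ∀ x, x₀ ≤ x) (hx₀D : x₀ ∉ D)
    (hf : ∀ x y, x ≤ y → (f x = f y ↔ ∀ d ∈ D, d ∉ Set.Ioc x y)) :
    (Set.range f).ncard = #D + 1 := by
  have hrange : Set.range f = f '' ↑(insert x₀ D) := by
    refine (Set.image_subset_range _ _).antisymm' ?_
    rintro _ ⟨x, rfl⟩
    obtain ⟨d, hd, hmax⟩ := ((insert x₀ D).filter (· ≤ x)).exists_max_image id
      ⟨x₀, mem_filter.2 ⟨mem_insert_self _ _, hx₀ x⟩⟩
    rw [mem_filter] at hd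
    refine ⟨d, hd.1, (hf d x hd.2).2 fun e he hde => ?_⟩
    exact (hmax e (mem_filter.2 ⟨mem_insert_of_mem he, hde.2⟩)).not_gt hde.1
  have hinj : Set.InjOn f ↑(insert x₀ D) := by
    intro a ha b hb hab
    by_contra hne
    wlog hlt : a < b generalizing a b
    · exact this hb ha hab.symm (Ne.symm hne) (lt_of_le_of_ne (not_lt.1 hlt) (Ne.symm hne))
    have hbD : b ∈ D := (mem_insert.1 hb).resolve_left (hx₀ a |>.trans_lt hlt).ne'
    exact (hf a b hlt.le).1 hab b hbD ⟨hlt, le_rfl⟩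
  rw [hrange, hinj.ncard_image, Set.ncard_coe_finset, card_insert_of_notMem hx₀D]

theorem setOf_exists_zpow_eq_range {α β : Type*} (S : Equiv.Perm α) (c : α → β) (n : ℕ) :
    {w : Fin n → β | ∃ (x : α) (i : ℤ), ∀ m : Fin n, w m = c ((S ^ (i + (m : ℤ))) x)} =
      Set.range fun x (m : Fin n) => c ((S ^ (m : ℕ)) x) := by
  ext w
  simp only [Set.mem_ofPred_eq, Set.mem_range, funext_iff]
  constructor
  · rintro ⟨x, i, hw⟩
    refine ⟨(S ^ i) x, fun m => ?_⟩
    rw [hw m, add_comm, zpow_add, Equiv.Perm.mul_apply, zpow_natCast]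
  · rintro ⟨x, hw⟩
    exact ⟨x, 0, fun m => by rw [← hw m, zero_add, zpow_natCast]⟩

theorem eq_iff_forall_notMem_Ioc {α ι : Type*} [LinearOrder α] {c : α → ι} {p : ι → α} {j₀ : ι}
    (hconv : ∀ j, (c ⁻¹' {j}).OrdConnected) (hp : ∀ j, IsLeast (c ⁻¹' {j}) (p j))
    (hbot : ∀ x, p j₀ ≤ x) {u v : α} (huv : u ≤ v) :
    c u = c v ↔ ∀ j ≠ j₀, p j ∉ Set.Ioc u v := by
  constructor
  · rintro hcuv j - ⟨hu, hv⟩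
    have hj : j = c u := ((hp j).1 : c (p j) = j).symm.trans
      ((hconv (c u)).out rfl hcuv.symm ⟨hu.le, hv⟩)
    exact hu.not_ge (hj ▸ (hp (c u)).2 rfl)
  · intro h
    by_contra hne
    have hu : u < p (c v) := lt_of_not_ge fun hle => hne ((hconv _).out (hp _).1 rfl ⟨hle, huv⟩)
    have hv : c v ≠ j₀ := by rintro hv; exact hu.not_ge (hv ▸ hbot u)
    exact h _ hv ⟨hu, (hp _).2 rfl⟩

section PiecewiseTranslation

variable {X : Set ℝ} {ι : Type*} {S : Equiv.Perm X} {c : X → ι}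

theorem pow_apply_sub_eq_of_forall_lt_code_eq {τ : ι → ℝ} (hS : ∀ x, (S x : ℝ) = x + τ (c x))
    (hconv : ∀ j, (c ⁻¹' {j}).OrdConnected) {x y : X} {k : ℕ}
    (hcodes : ∀ m < k, c ((S ^ m) x) = c ((S ^ m) y)) {z : X} (hxz : x ≤ z) (hzy : z ≤ y) :
    ((S ^ k) z : ℝ) - z = (S ^ k) x - x := by
  induction k generalizing z with
  | zero => simp
  | succ k ih =>
    have ih' : ∀ z, x ≤ z → z ≤ y → ((S ^ k) z : ℝ) - z = (S ^ k) x - x :=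
      fun z h₁ h₂ => ih (fun m hm => hcodes m (by omega)) h₁ h₂
    have hz := ih' z hxz hzy
    have hy := ih' y (hxz.trans hzy) le_rfl
    have hxz' : (x : ℝ) ≤ z := hxz
    have hzy' : (z : ℝ) ≤ y := hzy
    have hcz : c ((S ^ k) z) = c ((S ^ k) x) :=
      (hconv _).out rfl (hcodes k k.lt_succ_self).symm
        ⟨show ((S ^ k) x : ℝ) ≤ (S ^ k) z by linarith, show ((S ^ k) z : ℝ) ≤ (S ^ k) y by linarith⟩
    rw [pow_succ', Equiv.Perm.mul_apply, Equiv.Perm.mul_apply, hS, hS, hcz]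
    linarith

theorem inv_apply_mem_Ioc_iff (hX : X.OrdConnected) (f : Equiv.Perm X) {x y : X} (hxy : x ≤ y)
    (htr : ∀ z, x ≤ z → z ≤ y → (f z : ℝ) - z = f x - x) (q : X) :
    f⁻¹ q ∈ Set.Ioc x y ↔ q ∈ Set.Ioc (f x) (f y) := by
  have hy := htr y hxy le_rfl
  have hxy' : (x : ℝ) ≤ y := hxy
  obtain ⟨z, rfl⟩ := f.surjective q
  rw [show f⁻¹ (f z) = z from Equiv.Perm.inv_eq_iff_eq.2 rfl]
  constructor
  · rintro ⟨hxz, hzy⟩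
    have hz := htr z hxz.le hzy
    have hxz' : (x : ℝ) < z := hxz
    have hzy' : (z : ℝ) ≤ y := hzy
    exact ⟨show ((f x : X) : ℝ) < f z by linarith, show ((f z : X) : ℝ) ≤ f y by linarith⟩
  · rintro ⟨hxz, hzy⟩
    have hxz' : ((f x : X) : ℝ) < f z := hxz
    have hzy' : ((f z : X) : ℝ) ≤ f y := hzy
    set w : X := ⟨f z - (f x - x), hX.out x.2 y.2 ⟨by linarith, by linarith⟩⟩
    have hxw : x < w := show (x : ℝ) < f z - (f x - x) by linarith
    have hwy : w ≤ y := show ((f z : X) : ℝ) - ((f x : ℝ) - x) ≤ y by linarith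
    have hwz : w = z := f.injective <| Subtype.ext <| by
      have := htr w hxw.le hwy
      simp only [w] at this ⊢
      linarith
    exact hwz ▸ ⟨hxw, hwy⟩

theorem forall_lt_code_pow_eq_iff {τ : ι → ℝ} {p : ι → X} {j₀ : ι} (hX : X.OrdConnected)
    (hS : ∀ x, (S x : ℝ) = x + τ (c x)) (hconv : ∀ j, (c ⁻¹' {j}).OrdConnected)
    (hp : ∀ j, IsLeast (c ⁻¹' {j}) (p j)) (hbot : ∀ x, p j₀ ≤ x) {x y : X} (hxy : x ≤ y)
    (n : ℕ) :
    (∀ m < n, c ((S ^ m) x) = c ((S ^ m) y)) ↔ ∀ k < n, ∀ j ≠ j₀, (S ^ k)⁻¹ (p j) ∉ Set.Ioc x y := by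
  induction n with
  | zero => simp
  | succ n ih =>
    rw [Nat.forall_lt_succ_right, Nat.forall_lt_succ_right, ← ih]
    refine and_congr_right fun hcodes => ?_
    have htr := fun z => pow_apply_sub_eq_of_forall_lt_code_eq hS hconv hcodes (z := z)
    have hSxy : (S ^ n) x ≤ (S ^ n) y := by
      have := htr y hxy le_rfl
      have hxy' : (x : ℝ) ≤ y := hxy
      show ((S ^ n) x : ℝ) ≤ (S ^ n) y
      linarith
    rw [eq_iff_forall_notMem_Ioc hconv hp hbot hSxy]
    exact forall₂_congr fun j _ => not_congr (inv_apply_mem_Ioc_iff hX _ hxy htr _).symm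

end PiecewiseTranslation

section CutPoints

variable {α ι : Type*} [DecidableEq α] [Fintype ι] [DecidableEq ι]
  {S : Equiv.Perm α} {p : ι → α} {j₀ : ι}

def cutPoints (S : Equiv.Perm α) (p : ι → α) (j₀ : ι) (n : ℕ) : Finset α :=
  (range n ×ˢ univ.erase j₀).image fun kj => (S ^ kj.1)⁻¹ (p kj.2)

theorem mem_cutPoints {n : ℕ} {d : α} :
    d ∈ cutPoints S p j₀ n ↔ ∃ k < n, ∃ j ≠ j₀, (S ^ k)⁻¹ (p j) = d := by
  simp [cutPoints, and_assoc]

theorem forall_mem_cutPoints_iff {n : ℕ} {P : α → Prop} :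
    (∀ d ∈ cutPoints S p j₀ n, P d) ↔ ∀ k < n, ∀ j ≠ j₀, P ((S ^ k)⁻¹ (p j)) := by
  refine ⟨fun h k hk j hj => h _ (mem_cutPoints.2 ⟨k, hk, j, hj, rfl⟩), fun h d hd => ?_⟩
  obtain ⟨k, hk, j, hj, rfl⟩ := mem_cutPoints.1 hd
  exact h k hk j hj

theorem card_cutPoints (hp : Function.Injective p)
    (hidoc : ∀ j ≠ j₀, ∀ j' ≠ j₀, ∀ m : ℕ, 0 < m → (S ^ m) (p j) ≠ p j') (n : ℕ) :
    #(cutPoints S p j₀ n) = n * (Fintype.card ι - 1) := by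
  rw [cutPoints, card_image_of_injOn, card_product, card_range, card_erase_of_mem (mem_univ _),
    card_univ]
  rintro ⟨k, j⟩ hkj ⟨k', j'⟩ hkj' heq
  simp only [coe_product, coe_range, coe_erase, coe_univ, Set.mem_prod, Set.mem_Iio,
    Set.mem_sdiff, Set.mem_univ, Set.mem_singleton_iff, true_and] at hkj hkj' heq
  wlog hle : k ≤ k' generalizing k k' j j'
  · exact (this k' j' k j heq.symm hkj' hkj (le_of_not_ge hle)).symm
  obtain ⟨m, rfl⟩ := Nat.exists_eq_add_of_le hle
  have hm : (S ^ m) (p j) = p j' := by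
    have h := congrArg (S ^ (k + m)) heq
    simp only [Equiv.Perm.coe_inv, Equiv.apply_symm_apply] at h
    rwa [add_comm, pow_add, Equiv.Perm.mul_apply, Equiv.apply_symm_apply] at h
  rcases m.eq_zero_or_pos with rfl | hm₀
  · exact Prod.ext rfl (hp hm)
  · exact absurd hm (hidoc j hkj.2 j' hkj'.2 m hm₀)

theorem notMem_cutPoints (hidoc : ∀ j ≠ j₀, ∀ j' ≠ j₀, ∀ m : ℕ, 0 < m → (S ^ m) (p j) ≠ p j')
    {j₁ : ι} (hj₁ : j₁ ≠ j₀) (hS₁ : S (p j₁) = p j₀) (n : ℕ) : p j₀ ∉ cutPoints S p j₀ n := by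
  intro hmem
  obtain ⟨k, -, j, hj, h⟩ := mem_cutPoints.1 hmem
  refine hidoc j₁ hj₁ j hj (k + 1) k.succ_pos ?_
  rw [pow_succ, Equiv.Perm.mul_apply, hS₁, ← Equiv.Perm.eq_inv_iff_eq, h]

end CutPoints

section IntervalPartition

variable {X : Set ℝ} {ι : Type*} {code : X → ι} {a b : ι → ℝ}

theorem ordConnected_preimage_singleton
    (hcode : ∀ x j, code x = j ↔ (x : ℝ) ∈ Set.Ico (a j) (b j)) (j : ι) :
    (code ⁻¹' {j}).OrdConnected := by
  rw [show code ⁻¹' {j} = Subtype.val ⁻¹' Set.Ico (a j) (b j) from Set.ext fun x => hcode x j]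
  exact Set.ordConnected_Ico.preimage_mono (Subtype.mono_coe _)

theorem isLeast_preimage_singleton
    (hcode : ∀ x j, code x = j ↔ (x : ℝ) ∈ Set.Ico (a j) (b j)) {j : ι} {p : X}
    (hp : (p : ℝ) = a j) (hab : a j < b j) : IsLeast (code ⁻¹' {j}) p := by
  refine ⟨(hcode p j).2 ⟨hp.ge, hp ▸ hab⟩, fun x hx => ?_⟩
  show (p : ℝ) ≤ x
  exact hp ▸ ((hcode x j).1 hx).1

end IntervalPartition

theorem sum_mem_Ico_of_notMem {ι : Type*} [Fintype ι] {lam : ι → ℝ} (hpos : ∀ j, 0 < lam j)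
    (hsum : ∑ j, lam j = 1) {s : Finset ι} {j : ι} (hj : j ∉ s) :
    ∑ i ∈ s, lam i ∈ Set.Ico (0 : ℝ) 1 :=
  ⟨sum_nonneg fun i _ => (hpos i).le, hsum ▸ sum_lt_sum_of_subset (subset_univ s) (mem_univ j) hj
    (hpos j) fun i _ _ => (hpos i).le⟩

theorem symm_zero_ne_zero_of_irreducible {r : ℕ} [NeZero r] (hr : 2 ≤ r)
    {perm : Equiv.Perm (Fin r)}
    (hirr : ∀ k : ℕ, k + 1 < r → ¬ ∀ i : Fin r, (i : ℕ) ≤ k → ((perm i : Fin r) : ℕ) ≤ k) :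
    perm.symm 0 ≠ 0 := fun h => hirr 0 (by omega) fun i hi => by
  rw [show i = 0 from Fin.ext (by simpa using hi), ← h, Equiv.apply_symm_apply]
  simp

theorem stmt_16 (r : ℕ) (hr : 2 ≤ r) (perm : Equiv.Perm (Fin r))
    -- the permutation is irreducible: no proper initial segment is invariant
    (hirr : ∀ k : ℕ, k + 1 < r → ¬ ∀ i : Fin r, (i : ℕ) ≤ k → ((perm i : Fin r) : ℕ) ≤ k)
    (lam : Fin r → ℝ) (hpos : ∀ j, 0 < lam j) (hsum : ∑ j, lam j = 1)
    -- left endpoints of the exchanged intervals, before and after applying `perm`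
    (l l' : Fin r → ℝ)
    (hl : ∀ j, l j = ∑ i ∈ Finset.univ.filter (fun i => i < j), lam i)
    (hl' : ∀ j, l' j = ∑ i ∈ Finset.univ.filter (fun i => perm i < perm j), lam i)
    -- `S` is the interval exchange transformation `T_{π,λ}` on `I = [0,1)`,
    -- as a bijection of `I` (so that `S ^ n` makes sense for all `n ∈ ℤ`)
    (S : Equiv.Perm (Set.Ico (0 : ℝ) 1))
    (hS : ∀ (x : Set.Ico (0 : ℝ) 1) (j : Fin r),
      (x : ℝ) ∈ Set.Ico (l j) (l j + lam j) → ((S x : Set.Ico (0 : ℝ) 1) : ℝ) = x + (l' j - l j))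
    -- the natural coding: `code x = j` iff `x` lies in the `j`-th interval
    (code : Set.Ico (0 : ℝ) 1 → Fin r)
    (hcode : ∀ (x : Set.Ico (0 : ℝ) 1) (j : Fin r),
      code x = j ↔ (x : ℝ) ∈ Set.Ico (l j) (l j + lam j))
    -- IDOC (Keane's infinite distinct orbit condition): the orbits of the
    -- discontinuity points are infinite and pairwise distinct
    (hidoc : ∀ j j' : Fin r, (j : ℕ) ≠ 0 → (j' : ℕ) ≠ 0 →
      ∀ p p' : Set.Ico (0 : ℝ) 1, (p : ℝ) = l j → (p' : ℝ) = l j' →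
        ∀ m : ℤ, 1 ≤ m → (S ^ m) p ≠ p') :
    ∀ n : ℕ, 1 ≤ n →
      {w : Fin n → Fin r | ∃ (x : Set.Ico (0 : ℝ) 1) (i : ℤ),
          ∀ m : Fin n, w m = code ((S ^ (i + (m : ℤ))) x)}.ncard
        = (r - 1) * n + 1 := by
  intro n _
  have : NeZero r := ⟨by omega⟩
  let p : Fin r → Set.Ico (0 : ℝ) 1 := fun j =>
    ⟨l j, hl j ▸ sum_mem_Ico_of_notMem hpos hsum (j := j) (by simp)⟩
  have hconv := ordConnected_preimage_singleton hcode
  have hp : ∀ j, IsLeast (code ⁻¹' {j}) (p j) := fun j =>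
    isLeast_preimage_singleton hcode rfl (lt_add_of_pos_right _ (hpos j))
  have hl₀ : l 0 = 0 := by simp [hl]
  have hbot : ∀ x, p 0 ≤ x := fun x => show l 0 ≤ x from hl₀.trans_le x.2.1
  have hidoc' : ∀ j ≠ 0, ∀ j' ≠ 0, ∀ m : ℕ, 0 < m → (S ^ m) (p j) ≠ p j' :=
    fun j hj j' hj' m hm => by
      simpa using hidoc j j' (Fin.val_ne_zero_iff.2 hj) (Fin.val_ne_zero_iff.2 hj') (p j) (p j')
        rfl rfl m (by exact_mod_cast hm)
  have hS₁ : S (p (perm.symm 0)) = p 0 := by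
    have hl'₁ : l' (perm.symm 0) = 0 := by simp [hl']
    ext
    show (S (p _) : ℝ) = l 0
    rw [hS _ _ ((hcode _ _).1 (hp _).1), hl'₁, hl₀]
    ring
  rw [setOf_exists_zpow_eq_range, ncard_range_eq_card_add_one hbot
    (notMem_cutPoints hidoc' (symm_zero_ne_zero_of_irreducible hr hirr) hS₁ n),
    card_cutPoints (Function.LeftInverse.injective fun j => (hp j).1) hidoc', Fintype.card_fin,
    mul_comm]
  intro x y hxy
  have hS' : ∀ x, (S x : ℝ) = x + (l' (code x) - l (code x)) := fun x => hS x _ ((hcode x _).1 rfl)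
  rw [forall_mem_cutPoints_iff, ← forall_lt_code_pow_eq_iff (τ := fun j => l' j - l j)
    Set.ordConnected_Ico hS' hconv hp hbot hxy n]
  simp [funext_iff, Fin.forall_iff]
end
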